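/- Let G be the group generated by isometries of R³: X(x,y,z) = (−x, y+1/2, −z+1/2) and Y(x,y,z) = (x+1/2, −y, −z) together with the integer translation lattice Z³. Then G acts freely on R³ (no non-identity element has a fixed point). -/
import Mathlib


/-- The generator `X : (x,y,z) ↦ (-x, y+1/2, -z+1/2)` of the Hantzsche–Wendt
space group (international no. 19, `P2₁2₁2₁`). -/
noncomputable def hwX : Equiv.Perm (ℝ × ℝ × ℝ) where
  toFun p := (-p.1, p.2.1 + 1/2, -p.2.2 + 1/2)
  invFun p := (-p.1, p.2.1 - 1/2, -p.2.2 + 1/2)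
  left_inv p := by obtain ⟨x, y, z⟩ := p; simp [Prod.ext_iff]
  right_inv p := by obtain ⟨x, y, z⟩ := p; simp [Prod.ext_iff]

/-- The generator `Y : (x,y,z) ↦ (x+1/2, -y, -z)`. -/
noncomputable def hwY : Equiv.Perm (ℝ × ℝ × ℝ) where
  toFun p := (p.1 + 1/2, -p.2.1, -p.2.2)
  invFun p := (p.1 - 1/2, -p.2.1, -p.2.2)
  left_inv p := by obtain ⟨x, y, z⟩ := p; simp [Prod.ext_iff]
  right_inv p := by obtain ⟨x, y, z⟩ := p; simp [Prod.ext_iff]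

/-- The translation of `ℝ³` by a vector `v`. -/
noncomputable def transBy (v : ℝ × ℝ × ℝ) : Equiv.Perm (ℝ × ℝ × ℝ) where
  toFun p := (p.1 + v.1, p.2.1 + v.2.1, p.2.2 + v.2.2)
  invFun p := (p.1 - v.1, p.2.1 - v.2.1, p.2.2 - v.2.2)
  left_inv p := by obtain ⟨x, y, z⟩ := p; simp [Prod.ext_iff]
  right_inv p := by obtain ⟨x, y, z⟩ := p; simp [Prod.ext_iff]

/-- The Hantzsche–Wendt space group: generated by the two screw motions `hwX`, `hwY`
and the integer translation lattice `ℤ³`. -/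
noncomputable def hwGroup : Subgroup (Equiv.Perm (ℝ × ℝ × ℝ)) :=
  Subgroup.closure ({hwX, hwY} ∪ {g | ∃ a b c : ℤ, g = transBy ((a : ℝ), (b : ℝ), (c : ℝ))})

/-- Normal form for elements of the Hantzsche–Wendt group. -/
def HWform (g : Equiv.Perm (ℝ × ℝ × ℝ)) : Prop :=
  ∃ e₁ e₂ : ℝ, (e₁ = 1 ∨ e₁ = -1) ∧ (e₂ = 1 ∨ e₂ = -1) ∧
    ∃ m n k : ℤ, ∀ p : ℝ × ℝ × ℝ,
      g p = (e₁ * p.1 + m + (1 - e₂) / 4,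
             e₂ * p.2.1 + n + (1 - e₁) / 4,
             e₁ * e₂ * p.2.2 + k + (1 - e₁) / 4)

lemma offset_mul (e f g : ℝ) (he : e = 1 ∨ e = -1) (hf : f = 1 ∨ f = -1)
    (hg : g = 1 ∨ g = -1) (m m' : ℤ) :
    ∃ M : ℤ, e * ((m' : ℝ) + (1 - f) / 4) + m + (1 - g) / 4 = M + (1 - g * f) / 4 := by
  rcases he with rfl | rfl <;> rcases hf with rfl | rfl <;> rcases hg with rfl | rfl
  exacts [⟨m' + m, by push_cast; ring⟩, ⟨m' + m, by push_cast; ring⟩,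
          ⟨m' + m, by push_cast; ring⟩, ⟨m' + m + 1, by push_cast; ring⟩,
          ⟨-m' + m, by push_cast; ring⟩, ⟨-m' + m, by push_cast; ring⟩,
          ⟨-m' + m - 1, by push_cast; ring⟩, ⟨-m' + m, by push_cast; ring⟩]

lemma offset_inv (e f : ℝ) (he : e = 1 ∨ e = -1) (hf : f = 1 ∨ f = -1) (m : ℤ) :
    ∃ M : ℤ, -(e * ((m : ℝ) + (1 - f) / 4)) = M + (1 - f) / 4 := by
  rcases he with rfl | rfl <;> rcases hf with rfl | rfl
  exacts [⟨-m, by push_cast; ring⟩, ⟨-m - 1, by push_cast; ring⟩,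
          ⟨m, by push_cast; ring⟩, ⟨m, by push_cast; ring⟩]

lemma hwform_mul {g h : Equiv.Perm (ℝ × ℝ × ℝ)} (Hg : HWform g) (Hh : HWform h) :
    HWform (g * h) := by
  obtain ⟨e₁, e₂, he₁, he₂, m, n, k, hg⟩ := Hg
  obtain ⟨f₁, f₂, hf₁, hf₂, m', n', k', hh⟩ := Hh
  have he₁₂ : e₁ * e₂ = 1 ∨ e₁ * e₂ = -1 := by
    rcases he₁ with rfl | rfl <;> rcases he₂ with rfl | rfl <;> norm_num
  obtain ⟨M, hM⟩ := offset_mul e₁ f₂ e₂ he₁ hf₂ he₂ m m'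
  obtain ⟨N, hN⟩ := offset_mul e₂ f₁ e₁ he₂ hf₁ he₁ n n'
  obtain ⟨K, hK⟩ := offset_mul (e₁ * e₂) f₁ e₁ he₁₂ hf₁ he₁ k k'
  refine ⟨e₁ * f₁, e₂ * f₂, ?_, ?_, M, N, K, fun p => ?_⟩
  · rcases he₁ with rfl | rfl <;> rcases hf₁ with rfl | rfl <;> norm_num
  · rcases he₂ with rfl | rfl <;> rcases hf₂ with rfl | rfl <;> norm_num
  · rw [Equiv.Perm.mul_apply, hh p, hg]
    refine Prod.ext ?_ (Prod.ext ?_ ?_) <;> simp only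
    · linear_combination hM
    · linear_combination hN
    · linear_combination hK

lemma hwform_inv {g : Equiv.Perm (ℝ × ℝ × ℝ)} (Hg : HWform g) : HWform g⁻¹ := by
  obtain ⟨e₁, e₂, he₁, he₂, m, n, k, hg⟩ := Hg
  have he₁₂ : e₁ * e₂ = 1 ∨ e₁ * e₂ = -1 := by
    rcases he₁ with rfl | rfl <;> rcases he₂ with rfl | rfl <;> norm_num
  have sq1 : e₁ * e₁ = 1 := by rcases he₁ with rfl | rfl <;> norm_num
  have sq2 : e₂ * e₂ = 1 := by rcases he₂ with rfl | rfl <;> norm_num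
  obtain ⟨M, hM⟩ := offset_inv e₁ e₂ he₁ he₂ m
  obtain ⟨N, hN⟩ := offset_inv e₂ e₁ he₂ he₁ n
  obtain ⟨K, hK⟩ := offset_inv (e₁ * e₂) e₁ he₁₂ he₁ k
  refine ⟨e₁, e₂, he₁, he₂, M, N, K, fun p => ?_⟩
  have : g⁻¹ p = g.symm p := rfl
  rw [this, Equiv.symm_apply_eq, hg]
  refine Prod.ext ?_ (Prod.ext ?_ ?_) <;> simp only
  · linear_combination e₁ * hM + ((m : ℝ) + (1 - e₂) / 4 - p.1) * sq1
  · linear_combination e₂ * hN + ((n : ℝ) + (1 - e₁) / 4 - p.2.1) * sq2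
  · linear_combination (e₁ * e₂) * hK
      + ((k : ℝ) + (1 - e₁) / 4 - p.2.2) * e₂ * e₂ * sq1
      + ((k : ℝ) + (1 - e₁) / 4 - p.2.2) * sq2

lemma hwform_all : ∀ g ∈ hwGroup, HWform g := by
  intro g hg
  induction hg using Subgroup.closure_induction with
  | mem x hx =>
    rcases hx with (rfl | rfl) | ⟨a, b, c, rfl⟩
    · exact ⟨-1, 1, Or.inr rfl, Or.inl rfl, 0, 0, 0, fun p => by
        simp only [hwX, Equiv.coe_fn_mk]; norm_num⟩
    · exact ⟨1, -1, Or.inl rfl, Or.inr rfl, 0, 0, 0, fun p => by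
        simp only [hwY, Equiv.coe_fn_mk]; norm_num⟩
    · exact ⟨1, 1, Or.inl rfl, Or.inl rfl, a, b, c, fun p => by
        simp only [transBy, Equiv.coe_fn_mk]; norm_num [add_comm]⟩
  | one => exact ⟨1, 1, Or.inl rfl, Or.inl rfl, 0, 0, 0, fun p => by
      simp only [Equiv.Perm.one_apply]; norm_num⟩
  | mul x y hx hy Hx Hy => exact hwform_mul Hx Hy
  | inv x hx Hx => exact hwform_inv Hx

/-- The Hantzsche–Wendt space group acts freely on `ℝ³`: no non-identity
element has a fixed point. -/
theorem hwGroup_acts_freely :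
    ∀ g ∈ hwGroup, ∀ p : ℝ × ℝ × ℝ, g p = p → g = 1 := by
  intro g hg p hp
  obtain ⟨e₁, e₂, he₁, he₂, m, n, k, h⟩ := hwform_all g hg
  have h0 := (h p).symm.trans hp
  have hx := congrArg Prod.fst h0
  have hy := congrArg (fun q => q.2.1) h0
  have hz := congrArg (fun q => q.2.2) h0
  simp only at hx hy hz
  rcases he₁ with rfl | rfl <;> rcases he₂ with rfl | rfl
  · have hm : (m : ℝ) = 0 := by linarith
    have hn : (n : ℝ) = 0 := by linarith
    have hk : (k : ℝ) = 0 := by linarith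
    have hm' : m = 0 := by exact_mod_cast hm
    have hn' : n = 0 := by exact_mod_cast hn
    have hk' : k = 0 := by exact_mod_cast hk
    subst hm' hn' hk'
    refine Equiv.ext fun q => ?_
    rw [h q]
    simp [Prod.ext_iff]
  · exfalso
    have : ((2 * m + 1 : ℤ) : ℝ) = 0 := by push_cast; linarith
    have h2 : (2 * m + 1 : ℤ) = 0 := by exact_mod_cast this
    omega
  · exfalso
    have : ((2 * n + 1 : ℤ) : ℝ) = 0 := by push_cast; linarith
    have h2 : (2 * n + 1 : ℤ) = 0 := by exact_mod_cast this
    omega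
  · exfalso
    have : ((2 * k + 1 : ℤ) : ℝ) = 0 := by push_cast; linarith
    have h2 : (2 * k + 1 : ℤ) = 0 := by exact_mod_cast this
    omega
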